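/- arXiv:2203.13521 — 4 statements merged into one kernel-verified Lean document; each statement's English description precedes it below -/
import Mathlib

section
/- (Chen's identity.) Let d ≥ 1, let X : [0,1] → ℝ^d be a continuously differentiable path, and let 0 < s < 1. Then for every n ≥ 0 and every multi-index (i₁,…,iₙ) ∈ {1,…,d}⁙ⁿ, S^{(i₁⋯iₙ)}_{[0,1]}(X) = Σ_{k=0}^{n} S^{(i₁⋯i_k)}_{[0,s]}(X) · S^{(i_{k+1}⋯iₙ)}_{[s,1]}(X), where the k = 0 term is S^{(i₁⋯iₙ)}_{[s,1]}(X) and the k = n term is S^{(i₁⋯iₙ)}_{[0,s]}(X). -/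
open MeasureTheory

/-- The open ordered simplex `{ t : Fin n → ℝ | a < t 0 < t 1 < ⋯ < t (n-1) < b }`. -/
def orderedSimplex (a b : ℝ) (n : ℕ) : Set (Fin n → ℝ) :=
  {t | (∀ i, a < t i ∧ t i < b) ∧ ∀ i j : Fin n, i < j → t i < t j}

/-- The iterated integral `S^{(i₁⋯iₙ)}_{[a,b]}(X)` of a path `X : ℝ → ℝ^d`.
For `n = 0` this is automatically `1`. -/
noncomputable def sig {d : ℕ} (X : ℝ → Fin d → ℝ) (a b : ℝ) {n : ℕ}
    (idx : Fin n → Fin d) : ℝ :=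
  ∫ t in orderedSimplex a b n, ∏ i, deriv (fun u => X u (idx i)) (t i)

lemma isOpen_orderedSimplex (a b : ℝ) (n : ℕ) : IsOpen (orderedSimplex a b n) := by
  have h2 : ∀ i j : Fin n, IsOpen {t : Fin n → ℝ | i < j → t i < t j} := by
    intro i j
    by_cases h : i < j
    · have : {t : Fin n → ℝ | i < j → t i < t j} = {t | t i < t j} := by
        ext t; simp [h]
      rw [this]; exact isOpen_lt (continuous_apply i) (continuous_apply j)
    · have : {t : Fin n → ℝ | i < j → t i < t j} = Set.univ := by
        ext t; simp [h]
      rw [this]; exact isOpen_univ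
  have : orderedSimplex a b n =
      (⋂ i, {t : Fin n → ℝ | a < t i ∧ t i < b}) ∩
      ⋂ i, ⋂ j, {t : Fin n → ℝ | i < j → t i < t j} := by
    ext t
    simp only [orderedSimplex, Set.mem_setOf_eq, Set.mem_inter_iff, Set.mem_iInter]
  rw [this]
  exact (isOpen_iInter_of_finite fun i =>
      (isOpen_lt continuous_const (continuous_apply i)).inter
        (isOpen_lt (continuous_apply i) continuous_const)).inter
    (isOpen_iInter_of_finite fun i => isOpen_iInter_of_finite fun j => h2 i j)

/-- The part of the simplex where the first `k` coordinates are `< s` and the rest `> s`. -/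
def splitSet (s : ℝ) (n k : ℕ) : Set (Fin n → ℝ) :=
  orderedSimplex 0 1 n ∩ {t | ∀ i : Fin n, (i.1 < k → t i < s) ∧ (k ≤ i.1 → s < t i)}

lemma isOpen_splitSet (s : ℝ) (n k : ℕ) : IsOpen (splitSet s n k) := by
  apply (isOpen_orderedSimplex 0 1 n).inter
  have : {t : Fin n → ℝ | ∀ i : Fin n, (i.1 < k → t i < s) ∧ (k ≤ i.1 → s < t i)} =
      ⋂ i : Fin n, ({t : Fin n → ℝ | i.1 < k → t i < s} ∩ {t | k ≤ i.1 → s < t i}) := by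
    ext t; simp only [Set.mem_setOf_eq, Set.mem_iInter, Set.mem_inter_iff]
  rw [this]
  refine isOpen_iInter_of_finite fun i => IsOpen.inter ?_ ?_
  · by_cases h : i.1 < k
    · have : {t : Fin n → ℝ | i.1 < k → t i < s} = {t | t i < s} := by ext t; simp [h]
      rw [this]; exact isOpen_lt (continuous_apply i) continuous_const
    · have : {t : Fin n → ℝ | i.1 < k → t i < s} = Set.univ := by ext t; simp [h]
      rw [this]; exact isOpen_univ
  · by_cases h : k ≤ i.1
    · have : {t : Fin n → ℝ | k ≤ i.1 → s < t i} = {t | s < t i} := by ext t; simp [h]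
      rw [this]; exact isOpen_lt continuous_const (continuous_apply i)
    · have : {t : Fin n → ℝ | k ≤ i.1 → s < t i} = Set.univ := by ext t; simp [h]
      rw [this]; exact isOpen_univ

lemma integrand_continuous {d n : ℕ} (X : ℝ → Fin d → ℝ) (hX : ContDiff ℝ 1 X)
    (idx : Fin n → Fin d) :
    Continuous fun t : Fin n → ℝ => ∏ i, deriv (fun u => X u (idx i)) (t i) := by
  have hg : ∀ j : Fin d, Continuous (deriv (fun u => X u j)) := by
    intro j
    have h1 : ContDiff ℝ 1 fun u => X u j :=
      ((ContinuousLinearMap.proj j : (Fin d → ℝ) →L[ℝ] ℝ).contDiff).comp hX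
    exact h1.continuous_deriv le_rfl
  exact continuous_finset_prod _ fun i _ => (hg (idx i)).comp (continuous_apply i)

lemma integrableOn_of_subset_box {n : ℕ} {f : (Fin n → ℝ) → ℝ} (hf : Continuous f)
    {S : Set (Fin n → ℝ)} {a b : ℝ}
    (hsub : S ⊆ Set.Icc (fun _ => a) (fun _ => b)) :
    IntegrableOn f S := by
  have hK : IsCompact (Set.Icc (fun _ => a) (fun _ => b) : Set (Fin n → ℝ)) := isCompact_Icc
  exact (hf.continuousOn.integrableOn_compact hK).mono_set hsub

lemma simplex_subset_box {n : ℕ} :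
    orderedSimplex 0 1 n ⊆ Set.Icc (fun _ => (0:ℝ)) (fun _ => 1) :=
  fun _ ht => ⟨fun i => (ht.1 i).1.le, fun i => (ht.1 i).2.le⟩

lemma exists_splitSet {n : ℕ} {s : ℝ} {t : Fin n → ℝ} (ht : t ∈ orderedSimplex 0 1 n)
    (hne : ∀ i, t i ≠ s) : ∃ k ∈ Finset.range (n + 1), t ∈ splitSet s n k := by
  classical
  set K := Finset.univ.filter (fun i : Fin n => t i < s) with hK
  have hmono : ∀ i j : Fin n, i ≤ j → t i ≤ t j := by
    intro i j hij
    rcases eq_or_lt_of_le hij with h | h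
    · rw [h]
    · exact (ht.2 i j h).le
  refine ⟨K.card, Finset.mem_range.2 (Nat.lt_succ_of_le
    (le_trans (Finset.card_filter_le _ _) (le_of_eq (by simp)))), ht, fun i => ?_⟩
  constructor
  · intro hik
    by_contra hcon
    push_neg at hcon
    have hlt : s < t i := lt_of_le_of_ne hcon (Ne.symm (hne i))
    have hsub : K ⊆ Finset.Iio i := by
      intro j hj
      rw [hK, Finset.mem_filter] at hj
      rw [Finset.mem_Iio]
      by_contra hji
      push_neg at hji
      exact absurd (hlt.trans_le (hmono i j hji)) (not_lt.2 hj.2.le)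
    have := Finset.card_le_card hsub
    rw [Fin.card_Iio] at this
    omega
  · intro hki
    by_contra hcon
    push_neg at hcon
    have hlt : t i < s := lt_of_le_of_ne hcon (hne i)
    have hsub : Finset.Iic i ⊆ K := by
      intro j hj
      rw [Finset.mem_Iic] at hj
      rw [hK, Finset.mem_filter]
      exact ⟨Finset.mem_univ _, lt_of_le_of_lt (hmono j i hj) hlt⟩
    have := Finset.card_le_card hsub
    rw [Fin.card_Iic] at this
    omega

lemma simplex_ae_eq {n : ℕ} (s : ℝ) :
    (orderedSimplex 0 1 n : Set (Fin n → ℝ)) =ᵐ[volume]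
      ⋃ k ∈ Finset.range (n + 1), splitSet s n k := by
  rw [MeasureTheory.ae_eq_set]
  constructor
  · refine measure_mono_null (t := ⋃ i : Fin n, {t : Fin n → ℝ | t i = s}) ?_ ?_
    · intro t ⟨ht, hcup⟩
      simp only [Set.mem_iUnion, Set.mem_setOf_eq]
      by_contra hcon
      push_neg at hcon
      obtain ⟨k, hk, hmem⟩ := exists_splitSet ht hcon
      exact hcup (Set.mem_biUnion hk hmem)
    · refine measure_iUnion_null fun i => ?_
      rw [volume_pi]
      exact Measure.pi_hyperplane (fun _ => (volume : Measure ℝ)) i s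
  · refine measure_mono_null (t := (∅ : Set (Fin n → ℝ))) ?_ ?_
    · intro t ⟨hcup, hns⟩
      simp only [Set.mem_iUnion] at hcup
      obtain ⟨k, _, hmem⟩ := hcup
      exact absurd hmem.1 hns
    · exact measure_empty

lemma decomp {n : ℕ} (f : (Fin n → ℝ) → ℝ) (hf : Continuous f) (s : ℝ) :
    ∫ t in orderedSimplex 0 1 n, f t
      = ∑ k ∈ Finset.range (n + 1), ∫ t in splitSet s n k, f t := by
  rw [setIntegral_congr_set (simplex_ae_eq s)]
  have hdisj : ∀ k k' : ℕ, k < k' → k' ≤ n → Disjoint (splitSet s n k) (splitSet s n k') := by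
    intro k k' hlt hle
    rw [Set.disjoint_left]
    intro t htk htk'
    have hi : k < n := lt_of_lt_of_le hlt hle
    have h1 := (htk.2 ⟨k, hi⟩).2 (le_refl k)
    have h2 := (htk'.2 ⟨k, hi⟩).1 hlt
    exact absurd (h1.trans h2) (lt_irrefl s)
  refine integral_biUnion_finset _ (fun k _ => (isOpen_splitSet s n k).measurableSet) ?_ ?_
  · intro k hk k' hk' hne
    simp only [Finset.coe_range, Set.mem_Iio] at hk hk'
    rcases hne.lt_or_gt with h | h
    · exact hdisj k k' h (by omega)
    · exact (hdisj k' k h (by omega)).symm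
  · intro k _
    exact integrableOn_of_subset_box hf (Set.inter_subset_left.trans simplex_subset_box)

lemma piece {n : ℕ} (G : Fin n → ℝ → ℝ) (s : ℝ) (hs0 : 0 < s) (hs1 : s < 1)
    (k : ℕ) (hk : k ≤ n) :
    ∫ t in splitSet s n k, ∏ i, G i (t i)
    = (∫ u in orderedSimplex 0 s k, ∏ i : Fin k, G ⟨i.1, lt_of_lt_of_le i.2 hk⟩ (u i)) *
      (∫ v in orderedSimplex s 1 (n - k), ∏ i : Fin (n - k), G ⟨k + i.1, by omega⟩ (v i)) := by
  set m := n - k with hm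
  have hkm : k + m = n := by omega
  set e : Fin k ⊕ Fin m ≃ Fin n := finSumFinEquiv.trans (finCongr hkm) with he
  set F : ((Fin k → ℝ) × (Fin m → ℝ)) ≃ᵐ (Fin n → ℝ) :=
    (MeasurableEquiv.sumPiEquivProdPi fun _ : Fin k ⊕ Fin m => ℝ).symm.trans
      (MeasurableEquiv.piCongrLeft (fun _ => ℝ) e) with hFdef
  have hFmp : MeasurePreserving F volume volume :=
    (volume_measurePreserving_piCongrLeft (fun _ => ℝ) e).comp
      (volume_measurePreserving_sumPiEquivProdPi_symm fun _ => ℝ)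
  have hFinl : ∀ (p : (Fin k → ℝ) × (Fin m → ℝ)) (i : Fin k), F p (e (Sum.inl i)) = p.1 i := by
    intro p i
    show (MeasurableEquiv.piCongrLeft (fun _ => ℝ) e)
        ((MeasurableEquiv.sumPiEquivProdPi fun _ => ℝ).symm p) (e (Sum.inl i)) = p.1 i
    rw [MeasurableEquiv.coe_piCongrLeft, Equiv.piCongrLeft_apply_apply]
    rfl
  have hFinr : ∀ (p : (Fin k → ℝ) × (Fin m → ℝ)) (i : Fin m), F p (e (Sum.inr i)) = p.2 i := by
    intro p i
    show (MeasurableEquiv.piCongrLeft (fun _ => ℝ) e)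
        ((MeasurableEquiv.sumPiEquivProdPi fun _ => ℝ).symm p) (e (Sum.inr i)) = p.2 i
    rw [MeasurableEquiv.coe_piCongrLeft, Equiv.piCongrLeft_apply_apply]
    rfl
  have heinl : ∀ i : Fin k, (e (Sum.inl i)).1 = i.1 := by
    intro i; simp [he]
  have heinr : ∀ i : Fin m, (e (Sum.inr i)).1 = k + i.1 := by
    intro i; simp [he]
  have hpre : F ⁻¹' splitSet s n k = orderedSimplex 0 s k ×ˢ orderedSimplex s 1 m := by
    ext p
    obtain ⟨u, v⟩ := p
    simp only [Set.mem_preimage, Set.mem_prod]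
    constructor
    · rintro ⟨⟨hb, hmono⟩, hsp⟩
      refine ⟨⟨fun i => ?_, fun i j hij => ?_⟩, ⟨fun i => ?_, fun i j hij => ?_⟩⟩
      · have h1 := (hb (e (Sum.inl i))).1
        have h2 := (hsp (e (Sum.inl i))).1 (by rw [heinl]; exact i.2)
        rw [hFinl] at h1 h2
        exact ⟨h1, h2⟩
      · have := hmono (e (Sum.inl i)) (e (Sum.inl j))
          (by rw [Fin.lt_def, heinl, heinl]; exact hij)
        rwa [hFinl, hFinl] at this
      · have h1 := (hb (e (Sum.inr i))).2
        have h2 := (hsp (e (Sum.inr i))).2 (by rw [heinr]; omega)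
        rw [hFinr] at h1 h2
        exact ⟨h2, h1⟩
      · have := hmono (e (Sum.inr i)) (e (Sum.inr j))
          (by rw [Fin.lt_def, heinr, heinr]; omega)
        rwa [hFinr, hFinr] at this
    · rintro ⟨⟨hu, humono⟩, hv, hvmono⟩
      have key : ∀ i : Fin n, ((i.1 < k → F (u, v) i < s) ∧ (k ≤ i.1 → s < F (u, v) i))
          ∧ 0 < F (u, v) i ∧ F (u, v) i < 1 := by
        intro i
        obtain ⟨j, rfl⟩ : ∃ j, e j = i := ⟨e.symm i, e.apply_symm_apply i⟩
        cases j with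
        | inl a =>
          rw [hFinl, heinl]
          exact ⟨⟨fun _ => (hu a).2, fun h => absurd (a.2.trans_le hk) (by omega)⟩,
            (hu a).1, (hu a).2.trans hs1⟩
        | inr a =>
          rw [hFinr, heinr]
          exact ⟨⟨fun h => by omega, fun _ => (hv a).1⟩, hs0.trans (hv a).1, (hv a).2⟩
      refine ⟨⟨fun i => ⟨(key i).2.1, (key i).2.2⟩, fun i j hij => ?_⟩, fun i => (key i).1⟩
      obtain ⟨i', rfl⟩ : ∃ i', e i' = i := ⟨e.symm i, e.apply_symm_apply i⟩
      obtain ⟨j', rfl⟩ : ∃ j', e j' = j := ⟨e.symm j, e.apply_symm_apply j⟩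
      rw [Fin.lt_def] at hij
      cases i' with
      | inl a =>
        cases j' with
        | inl b =>
          rw [hFinl, hFinl]
          exact humono a b (by rw [heinl a, heinl b] at hij; exact hij)
        | inr b =>
          rw [hFinl, hFinr]
          exact ((hu a).2.trans (hv b).1)
      | inr a =>
        cases j' with
        | inl b =>
          rw [heinr a, heinl b] at hij
          have hb := b.2
          omega
        | inr b =>
          rw [hFinr, hFinr]
          exact hvmono a b (by rw [heinr a, heinr b] at hij; omega)
  have hint : ∀ p : (Fin k → ℝ) × (Fin m → ℝ),
      (∏ i, G i (F p i)) =
        (∏ i : Fin k, G ⟨i.1, lt_of_lt_of_le i.2 hk⟩ (p.1 i)) *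
        (∏ i : Fin m, G ⟨k + i.1, by omega⟩ (p.2 i)) := by
    intro p
    rw [← e.prod_comp fun i => G i (F p i), Fintype.prod_sum_type]
    congr 1
    · refine Finset.prod_congr rfl fun i _ => ?_
      rw [hFinl]
      exact congrArg (fun j => G j (p.1 i)) (Fin.ext (heinl i))
    · refine Finset.prod_congr rfl fun i _ => ?_
      rw [hFinr]
      exact congrArg (fun j => G j (p.2 i)) (Fin.ext (heinr i))
  rw [← hFmp.setIntegral_preimage_emb F.measurableEmbedding, hpre]
  rw [show (fun p : (Fin k → ℝ) × (Fin m → ℝ) => ∏ i, G i (F p i)) = fun p =>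
      (∏ i : Fin k, G ⟨i.1, lt_of_lt_of_le i.2 hk⟩ (p.1 i)) *
      (∏ i : Fin m, G ⟨k + i.1, by omega⟩ (p.2 i)) from funext hint]
  rw [Measure.volume_eq_prod]
  exact setIntegral_prod_mul (fun u : Fin k → ℝ => ∏ i : Fin k, G ⟨i.1, lt_of_lt_of_le i.2 hk⟩ (u i))
    (fun v : Fin m → ℝ => ∏ i : Fin m, G ⟨k + i.1, by omega⟩ (v i)) _ _

/-- Chen's identity: for a continuously differentiable path `X`
and `0 < s < 1`,
`S^{(i₁⋯iₙ)}_{[0,1]}(X) = Σ_{k=0}^{n} S^{(i₁⋯i_k)}_{[0,s]}(X) · S^{(i_{k+1}⋯iₙ)}_{[s,1]}(X)`. -/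
theorem stmt_1 {d : ℕ} (hd : 1 ≤ d) (X : ℝ → Fin d → ℝ) (hX : ContDiff ℝ 1 X)
    (s : ℝ) (hs0 : 0 < s) (hs1 : s < 1) (n : ℕ) (idx : Fin n → Fin d) :
    sig X 0 1 idx =
      ∑ k : Fin (n + 1),
        sig X 0 s (fun i : Fin k.1 =>
            idx ⟨i.1, by have := i.2; have := k.2; omega⟩) *
        sig X s 1 (fun i : Fin (n - k.1) =>
            idx ⟨k.1 + i.1, by have := i.2; have := k.2; omega⟩) := by
  have hf := integrand_continuous X hX idx
  have h1 : sig X 0 1 idx = ∑ k ∈ Finset.range (n + 1),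
      ∫ t in splitSet s n k, ∏ i, deriv (fun u => X u (idx i)) (t i) :=
    decomp _ hf s
  rw [h1, Finset.sum_range]
  refine Finset.sum_congr rfl fun k _ => ?_
  exact piece (fun i => deriv (fun u => X u (idx i))) s hs0 hs1 k.1 (by omega)
end

section
/- (Shuffle product identity.) Let d ≥ 1 and let X : [0,1] → ℝ^d be a continuously differentiable path. Let I = (i₁,…,i_p) and J = (j₁,…,j_q) be multi-indices with entries in {1,…,d}. For each subset A ⊆ {1,…,p+q} with |A| = p, let w_A be the multi-index of length p+q whose entries at the positions of A, read in increasing order, are i₁,…,i_p, and whose entries at the positions of the complement of A, read in increasing order, are j₁,…,j_q. Then S^{(I)}(X) · S^{(J)}(X) = Σ_{A ⊆ {1,…,p+q}, |A| = p} S^{(w_A)}(X). -/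
open MeasureTheory

/-- The interleaving `w_A` of the multi-indices `I` (length `p`) and `J` (length `q`)
determined by a subset `A ⊆ {1,…,p+q}` of cardinality `p`: the entries at the
positions of `A`, read in increasing order, are those of `I`, and the entries at the
positions of the complement of `A`, read in increasing order, are those of `J`. -/
def interleave {d p q : ℕ} (I : Fin p → Fin d) (J : Fin q → Fin d)
    (A : Finset (Fin (p + q))) (hA : A.card = p) : Fin (p + q) → Fin d :=
  fun m =>
    if hm : m ∈ A then
      I ⟨(A.filter (fun x => x < m)).card, by
        have h2 : (A.filter (fun x => x < m)).card < A.card :=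
          Finset.card_lt_card ⟨Finset.filter_subset _ _,
            fun hsub => by simpa using hsub hm⟩
        omega⟩
    else
      J ⟨(Aᶜ.filter (fun x => x < m)).card, by
        have hAc : Aᶜ.card = q := by
          have h1 := Finset.card_compl A
          simp only [Fintype.card_fin, hA] at h1
          omega
        have h2 : (Aᶜ.filter (fun x => x < m)).card < Aᶜ.card :=
          Finset.card_lt_card ⟨Finset.filter_subset _ _,
            fun hsub => by simpa using hsub (Finset.mem_compl.mpr hm)⟩
        omega⟩

/-!
Write `Δ_n` for the ordered simplex. By Fubini, `S^{(I)} · S^{(J)}` is the integral of the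
product density over `Δ_p × Δ_q`. Away from the null set where some `s i = u j`, a pair
`(s, u) ∈ Δ_p × Δ_q` merges into a unique increasing `t ∈ Δ_{p+q}`, and the positions taken by
`s` form the set `A`. Hence `Δ_p × Δ_q` is, up to a null set, the disjoint union over `A` of the
images of `Δ_{p+q}` under `t ↦ (t|_A, t|_{Aᶜ})`. These maps are coordinate permutations, so
they preserve volume, and on the piece indexed by `A` the product density pulls back to the
density of `w_A`.
-/

open Finset Function

section Sorting

variable {α β : Type*} [LinearOrder β] {n : ℕ} {w : α → β}

theorem Equiv.eq_of_strictMono_comp_symm {e e' : α ≃ Fin n} (he : StrictMono (w ∘ e.symm))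
    (he' : StrictMono (w ∘ e'.symm)) : e = e' := by
  have hw : Injective w := by simpa [comp_assoc] using he.injective.comp e.injective
  have hcomp : w ∘ e.symm = w ∘ e'.symm :=
    (he.range_inj he').mp (by simp only [Set.range_comp, Equiv.range_eq_univ, Set.image_univ])
  exact Equiv.symm_bijective.injective (Equiv.ext fun m => hw (congrFun hcomp m))

theorem exists_equiv_strictMono_comp_symm (e₀ : α ≃ Fin n) (hw : Injective w) :
    ∃ e : α ≃ Fin n, StrictMono (w ∘ e.symm) :=
  let σ := Tuple.sort (w ∘ e₀.symm)
  ⟨e₀.trans σ.symm, (Tuple.monotone_sort (w ∘ e₀.symm)).strictMono_of_injective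
    (hw.comp (e₀.symm.injective.comp σ.injective))⟩

theorem StrictMono.comp_of_strictMono_comp_symm {γ : Type*} [Preorder γ] {e : α ≃ Fin n}
    {f : γ → α} (he : StrictMono (w ∘ e.symm)) (hf : StrictMono (w ∘ f)) :
    StrictMono (e ∘ f) :=
  fun i j hij => he.lt_iff_lt.mp (by simpa using hf hij)

end Sorting

theorem Finset.card_filter_lt_orderEmbOfFin {α : Type*} [LinearOrder α] (s : Finset α) {k : ℕ}
    (h : #s = k) (i : Fin k) : #(s.filter (fun x => x < s.orderEmbOfFin h i)) = i := by
  have : s.filter (fun x => x < s.orderEmbOfFin h i) =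
      (Iio i).map (s.orderEmbOfFin h).toEmbedding := by
    ext x
    simp only [mem_filter, mem_map, mem_Iio]
    constructor
    · rintro ⟨hx, hlt⟩
      obtain ⟨j, rfl⟩ : x ∈ Set.range (s.orderEmbOfFin h) := by rwa [range_orderEmbOfFin]
      exact ⟨j, by simpa using hlt, rfl⟩
    · rintro ⟨j, hj, rfl⟩
      exact ⟨s.orderEmbOfFin_mem h j, by simpa using hj⟩
  rw [this, card_map, Fin.card_Iio]

section Shuffle

variable {p q : ℕ}

theorem card_compl_of_card_eq {A : Finset (Fin (p + q))} (hA : #A = p) : #Aᶜ = q := by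
  rw [card_compl, Fintype.card_fin, hA, Nat.add_sub_cancel_left]

def shuffleEquiv (A : Finset (Fin (p + q))) (hA : #A = p) : Fin p ⊕ Fin q ≃ Fin (p + q) :=
  finSumEquivOfFinset hA (card_compl_of_card_eq hA)

variable {A : Finset (Fin (p + q))} (hA : #A = p)

theorem shuffleEquiv_inl (i : Fin p) : shuffleEquiv A hA (.inl i) = A.orderEmbOfFin hA i :=
  finSumEquivOfFinset_inl _ _ i

theorem shuffleEquiv_inr (j : Fin q) :
    shuffleEquiv A hA (.inr j) = Aᶜ.orderEmbOfFin (card_compl_of_card_eq hA) j :=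
  finSumEquivOfFinset_inr _ _ j

theorem strictMono_shuffleEquiv_inl : StrictMono (shuffleEquiv A hA ∘ Sum.inl) := by
  simpa only [comp_def, shuffleEquiv_inl] using (A.orderEmbOfFin hA).strictMono

theorem strictMono_shuffleEquiv_inr : StrictMono (shuffleEquiv A hA ∘ Sum.inr) := by
  simpa only [comp_def, shuffleEquiv_inr] using (Aᶜ.orderEmbOfFin _).strictMono

theorem range_shuffleEquiv_inl : Set.range (shuffleEquiv A hA ∘ Sum.inl) = A := by
  simp only [comp_def, shuffleEquiv_inl]
  exact range_orderEmbOfFin A hA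

theorem eq_of_shuffleEquiv_eq {B : Finset (Fin (p + q))} {hB : #B = p}
    (h : shuffleEquiv A hA = shuffleEquiv B hB) : A = B := by
  rw [← coe_inj, ← range_shuffleEquiv_inl hA, ← range_shuffleEquiv_inl hB, h]

theorem exists_eq_shuffleEquiv {e : Fin p ⊕ Fin q ≃ Fin (p + q)}
    (hl : StrictMono (e ∘ Sum.inl)) (hr : StrictMono (e ∘ Sum.inr)) :
    ∃ (A : Finset (Fin (p + q))) (hA : #A = p), e = shuffleEquiv A hA := by
  set A := univ.map ⟨e ∘ Sum.inl, e.injective.comp Sum.inl_injective⟩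
  have hA : #A = p := by simp [A]
  refine ⟨A, hA, Equiv.ext ?_⟩
  rintro (i | j)
  · rw [shuffleEquiv_inl, ← orderEmbOfFin_unique hA (f := e ∘ Sum.inl) (by simp [A]) hl]
    rfl
  · have hmem : ∀ j, (e ∘ Sum.inr) j ∈ Aᶜ := by simp [A]
    rw [shuffleEquiv_inr, ← orderEmbOfFin_unique _ hmem hr]
    rfl

theorem interleave_shuffleEquiv {d : ℕ} (I : Fin p → Fin d) (J : Fin q → Fin d) :
    interleave I J A hA ∘ shuffleEquiv A hA = Sum.elim I J := by
  funext x
  rcases x with i | j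
  · have hm := A.orderEmbOfFin_mem hA i
    simp only [comp_apply, shuffleEquiv_inl, interleave, dif_pos hm, Sum.elim_inl]
    exact congrArg I (Fin.ext (card_filter_lt_orderEmbOfFin A hA i))
  · have hm := Aᶜ.orderEmbOfFin_mem (card_compl_of_card_eq hA) j
    simp only [comp_apply, shuffleEquiv_inr, interleave, dif_neg (mem_compl.mp hm),
      Sum.elim_inr]
    exact congrArg J (Fin.ext (card_filter_lt_orderEmbOfFin Aᶜ _ j))

end Shuffle

section SplitCoords

variable {ι κ ν : Type*}

def splitCoords (e : ι ⊕ κ ≃ ν) : (ν → ℝ) ≃ᵐ (ι → ℝ) × (κ → ℝ) :=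
  (MeasurableEquiv.piCongrLeft (fun _ => ℝ) e).symm.trans
    (MeasurableEquiv.sumPiEquivProdPi fun _ => ℝ)

theorem splitCoords_apply (e : ι ⊕ κ ≃ ν) (t : ν → ℝ) :
    splitCoords e t = (fun i => t (e (.inl i)), fun j => t (e (.inr j))) :=
  rfl

theorem splitCoords_symm_apply (e : ι ⊕ κ ≃ ν) (z : (ι → ℝ) × (κ → ℝ)) :
    (splitCoords e).symm z = Sum.elim z.1 z.2 ∘ e.symm := by
  rw [MeasurableEquiv.symm_apply_eq, splitCoords_apply]
  simp

theorem measurePreserving_splitCoords_symm [Fintype ι] [Fintype κ] [Fintype ν]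
    (e : ι ⊕ κ ≃ ν) :
    MeasurePreserving (splitCoords e).symm :=
  (volume_measurePreserving_sumPiEquivProdPi_symm _).trans
    (volume_measurePreserving_piCongrLeft (fun _ => ℝ) e)

end SplitCoords

theorem volume_setOf_not_injective {ι : Type*} [Fintype ι] :
    volume {t : ι → ℝ | ¬Injective t} = 0 := by
  classical
  let L (i j : ι) : (ι → ℝ) →ₗ[ℝ] ℝ :=
    LinearMap.proj (R := ℝ) (φ := fun _ => ℝ) i - LinearMap.proj j
  have hcover : {t : ι → ℝ | ¬Injective t} =
      ⋃ i, ⋃ j, ⋃ (_ : i ≠ j), (LinearMap.ker (L i j) : Set (ι → ℝ)) := by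
    ext t
    simp [L, Injective, sub_eq_zero, and_comm]
  rw [hcover]
  refine measure_iUnion_null fun i => measure_iUnion_null fun j =>
    measure_iUnion_null fun hij => ?_
  refine Measure.addHaar_submodule _ _ fun htop => ?_
  have : Pi.single i (1 : ℝ) ∈ LinearMap.ker (L i j) := htop ▸ Submodule.mem_top
  simp [L, hij.symm] at this

theorem volume_setOf_not_injective_sumElim {ι κ : Type*} [Fintype ι] [Fintype κ] :
    volume {z : (ι → ℝ) × (κ → ℝ) | ¬Injective (Sum.elim z.1 z.2)} = 0 :=
  (volume_measurePreserving_sumPiEquivProdPi_symm fun _ : ι ⊕ κ => ℝ).quasiMeasurePreserving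
    |>.preimage_null volume_setOf_not_injective

section OrderedSimplex

variable {a b : ℝ} {n : ℕ}

theorem mem_orderedSimplex_iff {t : Fin n → ℝ} :
    t ∈ orderedSimplex a b n ↔ (∀ i, t i ∈ Set.Ioo a b) ∧ StrictMono t :=
  Iff.rfl

theorem measurableSet_orderedSimplex : MeasurableSet (orderedSimplex a b n) := by
  simp only [orderedSimplex, Set.ofPred_and, Set.ofPred_forall]
  refine .inter (.iInter fun i => .inter ?_ ?_)
    (.iInter fun i => .iInter fun j => .iInter fun _ => ?_) <;>
  exact measurableSet_lt (by fun_prop) (by fun_prop)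

theorem orderedSimplex_subset_Icc : orderedSimplex a b n ⊆ Set.Icc (fun _ => a) (fun _ => b) :=
  fun _ ht => ⟨fun i => (ht.1 i).1.le, fun i => (ht.1 i).2.le⟩

end OrderedSimplex

section Density

variable {d p q : ℕ} (X : ℝ → Fin d → ℝ)

noncomputable def sigDensity {n : ℕ} (idx : Fin n → Fin d) (t : Fin n → ℝ) : ℝ :=
  ∏ i, deriv (fun u => X u (idx i)) (t i)

theorem continuous_sigDensity (hX : ContDiff ℝ 1 X) {n : ℕ} (idx : Fin n → Fin d) :
    Continuous (sigDensity X idx) :=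
  continuous_finsetProd _ fun i _ =>
    ((contDiff_apply ℝ ℝ (idx i)).comp hX).continuous_deriv_one.comp (continuous_apply i)

theorem sig_mul_sig_eq_setIntegral_prod (a b : ℝ) (I : Fin p → Fin d) (J : Fin q → Fin d) :
    sig X a b I * sig X a b J =
      ∫ z in orderedSimplex a b p ×ˢ orderedSimplex a b q,
        sigDensity X I z.1 * sigDensity X J z.2 := by
  rw [Measure.volume_eq_prod, setIntegral_prod_mul]
  rfl

theorem integrableOn_sigDensity_mul_sigDensity (hX : ContDiff ℝ 1 X) (a b : ℝ)
    (I : Fin p → Fin d) (J : Fin q → Fin d) :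
    IntegrableOn (fun z => sigDensity X I z.1 * sigDensity X J z.2)
      (orderedSimplex a b p ×ˢ orderedSimplex a b q) :=
  (((continuous_sigDensity X hX I).comp continuous_fst).mul
    ((continuous_sigDensity X hX J).comp continuous_snd)).continuousOn.integrableOn_compact
    (isCompact_Icc.prod isCompact_Icc) |>.mono_set
    (Set.prod_mono orderedSimplex_subset_Icc orderedSimplex_subset_Icc)

theorem sigDensity_mul_sigDensity_splitCoords {e : Fin p ⊕ Fin q ≃ Fin (p + q)}
    {w : Fin (p + q) → Fin d} {I : Fin p → Fin d} {J : Fin q → Fin d}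
    (hw : w ∘ e = Sum.elim I J)
    (t : Fin (p + q) → ℝ) :
    sigDensity X I (splitCoords e t).1 * sigDensity X J (splitCoords e t).2 =
      sigDensity X w t := by
  simp only [sigDensity, splitCoords_apply]
  rw [← e.prod_comp, Fintype.prod_sum_type]
  simp only [← comp_apply (f := w), hw, Sum.elim_inl, Sum.elim_inr]

end Density

section ShufflePiece

variable {p q : ℕ} (a b : ℝ)

def shufflePiece (A : Finset (Fin (p + q))) (hA : #A = p) :
    Set ((Fin p → ℝ) × (Fin q → ℝ)) :=
  (splitCoords (shuffleEquiv A hA)).symm ⁻¹' orderedSimplex a b (p + q)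

theorem mem_shufflePiece_iff {A : Finset (Fin (p + q))} {hA : #A = p}
    {z : (Fin p → ℝ) × (Fin q → ℝ)} :
    z ∈ shufflePiece a b A hA ↔ (∀ x, Sum.elim z.1 z.2 x ∈ Set.Ioo a b) ∧
      StrictMono (Sum.elim z.1 z.2 ∘ (shuffleEquiv A hA).symm) := by
  rw [shufflePiece, Set.mem_preimage, splitCoords_symm_apply, mem_orderedSimplex_iff,
    (shuffleEquiv A hA).symm.forall_congr_left]
  simp

theorem splitCoords_mem_prod {e : Fin p ⊕ Fin q ≃ Fin (p + q)} (hl : StrictMono (e ∘ Sum.inl))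
    (hr : StrictMono (e ∘ Sum.inr)) {t : Fin (p + q) → ℝ}
    (ht : t ∈ orderedSimplex a b (p + q)) :
    splitCoords e t ∈ orderedSimplex a b p ×ˢ orderedSimplex a b q := by
  rw [splitCoords_apply]
  exact ⟨⟨fun i => ht.1 _, fun i j h => ht.2 _ _ (hl h)⟩,
    ⟨fun j => ht.1 _, fun i j h => ht.2 _ _ (hr h)⟩⟩

theorem shufflePiece_subset_prod (A : Finset (Fin (p + q))) (hA : #A = p) :
    shufflePiece a b A hA ⊆ orderedSimplex a b p ×ˢ orderedSimplex a b q := fun z hz => by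
  simpa using splitCoords_mem_prod a b (strictMono_shuffleEquiv_inl hA)
    (strictMono_shuffleEquiv_inr hA) hz

theorem measurableSet_shufflePiece (A : Finset (Fin (p + q))) (hA : #A = p) :
    MeasurableSet (shufflePiece a b A hA) :=
  (splitCoords _).symm.measurable measurableSet_orderedSimplex

theorem pairwise_disjoint_shufflePiece :
    Pairwise (Disjoint on
      fun A : {A : Finset (Fin (p + q)) // #A = p} => shufflePiece a b A.1 A.2) := by
  rintro ⟨A, hA⟩ ⟨B, hB⟩ hAB
  refine Set.disjoint_left.mpr fun z hzA hzB =>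
    hAB (Subtype.ext (eq_of_shuffleEquiv_eq hA (hB := hB) ?_))
  exact Equiv.eq_of_strictMono_comp_symm ((mem_shufflePiece_iff a b).mp hzA).2
    ((mem_shufflePiece_iff a b).mp hzB).2

theorem exists_mem_shufflePiece {z : (Fin p → ℝ) × (Fin q → ℝ)}
    (hz : z ∈ orderedSimplex a b p ×ˢ orderedSimplex a b q)
    (hinj : Injective (Sum.elim z.1 z.2)) :
    ∃ (A : Finset (Fin (p + q))) (hA : #A = p), z ∈ shufflePiece a b A hA := by
  obtain ⟨⟨hz₁, hmono₁⟩, ⟨hz₂, hmono₂⟩⟩ := hz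
  obtain ⟨e, he⟩ := exists_equiv_strictMono_comp_symm finSumFinEquiv hinj
  obtain ⟨A, hA, rfl⟩ := exists_eq_shuffleEquiv (he.comp_of_strictMono_comp_symm hmono₁)
    (he.comp_of_strictMono_comp_symm hmono₂)
  refine ⟨A, hA, (mem_shufflePiece_iff a b).mpr ⟨?_, he⟩⟩
  rintro (i | j)
  exacts [hz₁ i, hz₂ j]

theorem prod_orderedSimplex_ae_eq_iUnion_shufflePiece :
    (orderedSimplex a b p ×ˢ orderedSimplex a b q : Set _) =ᵐ[volume]
      ⋃ A : {A : Finset (Fin (p + q)) // #A = p}, shufflePiece a b A.1 A.2 := by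
  refine ae_eq_set.mpr ⟨measure_mono_null ?_ volume_setOf_not_injective_sumElim, ?_⟩
  · rintro z ⟨hz, hzU⟩ hinj
    obtain ⟨A, hA, hzA⟩ := exists_mem_shufflePiece a b hz hinj
    exact hzU (Set.mem_iUnion.mpr ⟨⟨A, hA⟩, hzA⟩)
  · have hsub : ⋃ A : {A : Finset (Fin (p + q)) // #A = p}, shufflePiece a b A.1 A.2 ⊆
        orderedSimplex a b p ×ˢ orderedSimplex a b q :=
      Set.iUnion_subset fun A => shufflePiece_subset_prod a b A.1 A.2
    rw [Set.sdiff_eq_empty.mpr hsub, measure_empty]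

theorem setIntegral_shufflePiece {d : ℕ} (X : ℝ → Fin d → ℝ) (I : Fin p → Fin d)
    (J : Fin q → Fin d) (A : Finset (Fin (p + q))) (hA : #A = p) :
    ∫ z in shufflePiece a b A hA, sigDensity X I z.1 * sigDensity X J z.2 =
      sig X a b (interleave I J A hA) := by
  set e := shuffleEquiv A hA
  calc ∫ z in shufflePiece a b A hA, sigDensity X I z.1 * sigDensity X J z.2
      = ∫ t in orderedSimplex a b (p + q), sigDensity X I (splitCoords e t).1 *
          sigDensity X J (splitCoords e t).2 := by
        simpa only [shufflePiece, MeasurableEquiv.apply_symm_apply] using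
          (measurePreserving_splitCoords_symm e).setIntegral_preimage_emb
          (splitCoords e).symm.measurableEmbedding
          (fun t => sigDensity X I (splitCoords e t).1 * sigDensity X J (splitCoords e t).2) _
    _ = sig X a b (interleave I J A hA) :=
        integral_congr_ae (ae_of_all _ fun t =>
          sigDensity_mul_sigDensity_splitCoords X (interleave_shuffleEquiv hA I J) t)

end ShufflePiece

theorem stmt_2_general {d p q : ℕ} (X : ℝ → Fin d → ℝ) (hX : ContDiff ℝ 1 X)
    (I : Fin p → Fin d) (J : Fin q → Fin d) :
    sig X 0 1 I * sig X 0 1 J =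
      ∑ A : {A : Finset (Fin (p + q)) // A.card = p},
        sig X 0 1 (interleave I J A.1 A.2) := by
  calc sig X 0 1 I * sig X 0 1 J
      = ∫ z in orderedSimplex 0 1 p ×ˢ orderedSimplex 0 1 q,
          sigDensity X I z.1 * sigDensity X J z.2 := sig_mul_sig_eq_setIntegral_prod X 0 1 I J
    _ = ∫ z in ⋃ A : {A : Finset (Fin (p + q)) // #A = p}, shufflePiece 0 1 A.1 A.2,
          sigDensity X I z.1 * sigDensity X J z.2 :=
        setIntegral_congr_set (prod_orderedSimplex_ae_eq_iUnion_shufflePiece 0 1)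
    _ = ∑ A : {A : Finset (Fin (p + q)) // #A = p}, ∫ z in shufflePiece 0 1 A.1 A.2,
          sigDensity X I z.1 * sigDensity X J z.2 :=
        integral_iUnion_fintype (fun A => measurableSet_shufflePiece 0 1 A.1 A.2)
          (pairwise_disjoint_shufflePiece 0 1) fun A =>
          (integrableOn_sigDensity_mul_sigDensity X hX 0 1 I J).mono_set
            (shufflePiece_subset_prod 0 1 A.1 A.2)
    _ = ∑ A : {A : Finset (Fin (p + q)) // #A = p}, sig X 0 1 (interleave I J A.1 A.2) :=
        Fintype.sum_congr _ _ fun A => setIntegral_shufflePiece 0 1 X I J A.1 A.2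

/-- shuffle product identity:
`S^{(I)}(X) · S^{(J)}(X) = Σ_{A ⊆ {1,…,p+q}, |A| = p} S^{(w_A)}(X)`. -/
theorem stmt_2 {d p q : ℕ} (hd : 1 ≤ d) (X : ℝ → Fin d → ℝ) (hX : ContDiff ℝ 1 X)
    (I : Fin p → Fin d) (J : Fin q → Fin d) :
    sig X 0 1 I * sig X 0 1 J =
      ∑ A : {A : Finset (Fin (p + q)) // A.card = p},
        sig X 0 1 (interleave I J A.1 A.2) :=
  stmt_2_general X hX I J
end

section
/- (Non-commutative Taylor expansion with explicit remainder.) Let d, e ≥ 1, let V₁,…,V_d : ℝ^e → ℝ^e be smooth vector fields, let F : ℝ^e → ℝ be smooth, let t > 0, let X : [0,t] → ℝ^d be a continuously differentiable path, and let Y : [0,t] → ℝ^e be continuously differentiable with Y'(u) = Σ_{i=1}^{d} V_i(Y(u)) · (X^{(i)})'(u) for all u ∈ [0,t]. Then for every n ≥ 0, F(Y(t)) = Σ_{k=0}^{n} Σ_{i₁,…,i_k = 1}^{d} (∇_{V_{i₁}} ⋯ ∇_{V_{i_k}} F)(Y(0)) · S^{(i₁⋯i_k)}_{[0,t]}(X)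 + R_{n+1}(t), where R_{n+1}(t) = Σ_{i₁,…,iₙ = 1}^{d} ∫_{0<u₁<⋯<uₙ<t} [ (∇_{V_{i₁}} ⋯ ∇_{V_{iₙ}} F)(Y(u₁)) − (∇_{V_{i₁}} ⋯ ∇_{V_{iₙ}} F)(Y(0)) ] (X^{(i₁)})'(u₁) ⋯ (X^{(iₙ)})'(uₙ) du₁⋯duₙ. -/
open MeasureTheory

/-- The directional derivative `(∇_V G)(y) = Σ_k V^{(k)}(y) ∂G/∂y^{(k)}(y)` of a
function `G : ℝ^e → ℝ` along a vector field `V : ℝ^e → ℝ^e`. -/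
noncomputable def dirDeriv {e : ℕ} (V : (Fin e → ℝ) → Fin e → ℝ)
    (G : (Fin e → ℝ) → ℝ) : (Fin e → ℝ) → ℝ :=
  fun y => ∑ j, V y j * fderiv ℝ G y (Pi.single j 1)

/-- Iterated directional derivatives `∇_{V_{i₁}} ⋯ ∇_{V_{i_k}} F` along the vector
fields selected by the multi-index `idx`; the outermost derivative corresponds to
the first index.  For `k = 0` this is `F` itself. -/
noncomputable def itDirDeriv {d e : ℕ} (V : Fin d → (Fin e → ℝ) → Fin e → ℝ)
    (F : (Fin e → ℝ) → ℝ) : {k : ℕ} → (Fin k → Fin d) → (Fin e → ℝ) → ℝ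
  | 0, _ => F
  | k + 1, idx => dirDeriv (V (idx 0)) (itDirDeriv V F (fun i : Fin k => idx i.succ))

lemma simplex_subset (a b : ℝ) (n : ℕ) :
    orderedSimplex a b n ⊆ Set.pi Set.univ (fun _ : Fin n => Set.Icc a b) := by
  intro u hu i _
  exact ⟨(hu.1 i).1.le, (hu.1 i).2.le⟩

lemma integrableOn_simplex {n : ℕ} {a b : ℝ} {f : (Fin n → ℝ) → ℝ} (hf : Continuous f) :
    IntegrableOn f (orderedSimplex a b n) := by
  refine (hf.continuousOn.integrableOn_compact ?_).mono_set (simplex_subset a b n)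
  exact isCompact_univ_pi fun _ => isCompact_Icc

lemma simplex_zero (a b : ℝ) : orderedSimplex a b 0 = Set.univ := by
  ext u
  exact ⟨fun _ => trivial, fun _ => ⟨fun i => i.elim0, fun i _ _ => i.elim0⟩⟩

lemma vol0 : (volume : Measure (Fin 0 → ℝ)) Set.univ = 1 := by
  rw [MeasureTheory.volume_pi, Measure.pi_of_empty]
  simp

lemma sig_zero {d : ℕ} (X : ℝ → Fin d → ℝ) (a b : ℝ) (idx : Fin 0 → Fin d) :
    sig X a b idx = 1 := by
  rw [sig, simplex_zero, Measure.restrict_univ]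
  simp [Measure.real, vol0]

lemma dirDeriv_contDiff {e : ℕ} {V : (Fin e → ℝ) → Fin e → ℝ} (hV : ContDiff ℝ (⊤:ℕ∞) V)
    {G : (Fin e → ℝ) → ℝ} (hG : ContDiff ℝ (⊤:ℕ∞) G) : ContDiff ℝ (⊤:ℕ∞) (dirDeriv V G) := by
  unfold dirDeriv
  refine ContDiff.sum fun j _ => ContDiff.mul ?_ ?_
  · exact (ContinuousLinearMap.proj j : (Fin e → ℝ) →L[ℝ] ℝ).contDiff.comp hV
  · have h1 : ContDiff ℝ (⊤:ℕ∞) (fderiv ℝ G) := hG.fderiv_right (by simp)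
    exact (ContinuousLinearMap.apply ℝ ℝ (Pi.single j 1)).contDiff.comp h1

lemma itDirDeriv_contDiff {d e : ℕ} {V : Fin d → (Fin e → ℝ) → Fin e → ℝ}
    (hV : ∀ i, ContDiff ℝ (⊤:ℕ∞) (V i)) {F : (Fin e → ℝ) → ℝ} (hF : ContDiff ℝ (⊤:ℕ∞) F) :
    ∀ {k : ℕ} (idx : Fin k → Fin d), ContDiff ℝ (⊤:ℕ∞) (itDirDeriv V F idx)
  | 0, _ => hF
  | _ + 1, idx => dirDeriv_contDiff (hV (idx 0)) (itDirDeriv_contDiff hV hF _)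

lemma cons_mem_simplex {n : ℕ} {t s : ℝ} {v : Fin n → ℝ} :
    Fin.cons s v ∈ orderedSimplex 0 t (n+1) ↔
      v ∈ orderedSimplex 0 t n ∧ 0 < s ∧ s < (if h : 0 < n then v ⟨0, h⟩ else t) := by
  constructor
  · rintro ⟨hb, hm⟩
    refine ⟨⟨fun i => by simpa using hb i.succ,
        fun i j hij => by simpa using hm i.succ j.succ (by simpa using hij)⟩, (hb 0).1, ?_⟩
    split_ifs with h
    · have := hm 0 (⟨0, h⟩ : Fin n).succ (Fin.succ_pos _)
      rw [Fin.cons_zero, Fin.cons_succ] at this; exact this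
    · simpa using (hb 0).2
  · rintro ⟨⟨hb, hm⟩, hs0, hst⟩
    have hsv : ∀ i : Fin n, s < v i := by
      intro i
      have h : 0 < n := i.pos
      rw [dif_pos h] at hst
      rcases eq_or_lt_of_le (show (⟨0, h⟩ : Fin n) ≤ i from Fin.le_def.mpr (Nat.zero_le _)) with heq | hlt
      · rwa [← heq]
      · exact hst.trans (hm _ _ hlt)
    have hst' : s < t := by
      split_ifs at hst with h
      · exact hst.trans (hb _).2
      · exact hst
    constructor
    · intro i
      induction i using Fin.cases with
      | zero => exact ⟨hs0, hst'⟩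
      | succ j => simpa using hb j
    · intro i j hij
      induction i using Fin.cases with
      | zero =>
        induction j using Fin.cases with
        | zero => exact absurd hij (lt_irrefl _)
        | succ j' => simpa using hsv j'
      | succ i' =>
        induction j using Fin.cases with
        | zero => exact absurd hij (by simp [Fin.lt_def])
        | succ j' => simpa using hm i' j' (by simpa using hij)

lemma continuous_bnd {n : ℕ} (t : ℝ) :
    Continuous (fun v : Fin n → ℝ => if h : 0 < n then v ⟨0, h⟩ else t) := by
  by_cases h : 0 < n
  · simp only [dif_pos h]; exact continuous_apply _
  · simp only [dif_neg h]; exact continuous_const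

lemma continuous_cons (n : ℕ) :
    Continuous (fun p : ℝ × (Fin n → ℝ) => (Fin.cons p.1 p.2 : Fin (n+1) → ℝ)) := by
  refine continuous_pi fun i => ?_
  induction i using Fin.cases with
  | zero => simpa using continuous_fst
  | succ j => simpa [Function.comp_def] using (continuous_apply j).comp continuous_snd

lemma simplex_integral_succ {n : ℕ} {t : ℝ} (f : (Fin (n+1) → ℝ) → ℝ)
    (hf : Continuous f) :
    ∫ u in orderedSimplex 0 t (n+1), f u
      = ∫ v in orderedSimplex 0 t n,
          ∫ s in Set.Ioo 0 (if h : 0 < n then v ⟨0, h⟩ else t), f (Fin.cons s v) := by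
  classical
  set b : (Fin n → ℝ) → ℝ := fun v => if h : 0 < n then v ⟨0, h⟩ else t with hb
  set e := MeasurableEquiv.piFinSuccAbove (fun _ : Fin (n+1) => ℝ) 0 with he
  have hes : ∀ p : ℝ × (Fin n → ℝ), e.symm p = Fin.cons p.1 p.2 := by
    intro p
    rw [he, MeasurableEquiv.piFinSuccAbove_symm_apply, Fin.insertNthEquiv_zero]
    rfl
  set T : Set (ℝ × (Fin n → ℝ)) :=
    {p | p.2 ∈ orderedSimplex 0 t n ∧ 0 < p.1 ∧ p.1 < b p.2} with hT
  have hTopen : IsOpen T := by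
    rw [hT]
    have : {p : ℝ × (Fin n → ℝ) | p.2 ∈ orderedSimplex 0 t n ∧ 0 < p.1 ∧ p.1 < b p.2}
        = (Prod.snd ⁻¹' orderedSimplex 0 t n) ∩
          ({p : ℝ × (Fin n → ℝ) | 0 < p.1} ∩ {p | p.1 < b p.2}) := by
      ext p; simp [Set.mem_inter_iff, and_assoc]
    rw [this]
    exact ((isOpen_orderedSimplex 0 t n).preimage continuous_snd).inter
      ((isOpen_lt continuous_const continuous_fst).inter
        (isOpen_lt continuous_fst ((continuous_bnd t).comp continuous_snd)))
  have hmp : MeasurePreserving (⇑e.symm) volume volume :=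
    (volume_preserving_piFinSuccAbove (fun _ : Fin (n+1) => ℝ) 0).symm e
  have himg : orderedSimplex 0 t (n+1) = e.symm '' T := by
    ext u
    constructor
    · intro hu
      refine ⟨(u 0, Fin.tail u), ?_, by rw [hes]; exact Fin.cons_self_tail u⟩
      have hc : Fin.cons (u 0) (Fin.tail u) ∈ orderedSimplex 0 t (n+1) := by
        rw [Fin.cons_self_tail]; exact hu
      rcases cons_mem_simplex.mp hc with ⟨h1, h2, h3⟩
      exact ⟨h1, h2, h3⟩
    · rintro ⟨p, hp, rfl⟩
      rw [hes]
      exact cons_mem_simplex.mpr ⟨hp.1, hp.2.1, hp.2.2⟩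
  rw [himg, hmp.setIntegral_image_emb e.symm.measurableEmbedding]
  have hgen : (fun p : ℝ × (Fin n → ℝ) => f (e.symm p)) = fun p => f (Fin.cons p.1 p.2) := by
    funext p; rw [hes]
  simp only [hgen]
  set g : ℝ × (Fin n → ℝ) → ℝ := fun p => f (Fin.cons p.1 p.2) with hg
  have hgc : Continuous g := hf.comp (continuous_cons n)
  have hTsub : T ⊆ (Set.Icc 0 t) ×ˢ (Set.pi Set.univ fun _ : Fin n => Set.Icc 0 t) := by
    rintro ⟨s, v⟩ ⟨hv, hs0, hsb⟩
    have hbt : b v ≤ t := by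
      rw [hb]
      split_ifs with h
      · exact (hv.1 _).2.le
      · exact le_rfl
    exact ⟨⟨hs0.le, hsb.le.trans hbt⟩, simplex_subset 0 t n hv⟩
  have hint : IntegrableOn g T := by
    refine (hgc.continuousOn.integrableOn_compact ?_).mono_set hTsub
    exact isCompact_Icc.prod (isCompact_univ_pi fun _ => isCompact_Icc)
  rw [← integral_indicator hTopen.measurableSet]
  have hint' : Integrable (T.indicator g)
      ((volume : Measure ℝ).prod (volume : Measure (Fin n → ℝ))) := by
    rw [← Measure.volume_eq_prod]
    exact (integrable_indicator_iff hTopen.measurableSet).mpr hint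
  rw [Measure.volume_eq_prod, integral_prod_symm _ hint']
  have hinner : ∀ v : Fin n → ℝ,
      (∫ s, T.indicator g (s, v)) =
        (orderedSimplex 0 t n).indicator (fun v => ∫ s in Set.Ioo 0 (b v), g (s, v)) v := by
    intro v
    by_cases hv : v ∈ orderedSimplex 0 t n
    · rw [Set.indicator_of_mem hv, ← integral_indicator measurableSet_Ioo]
      congr 1
      funext s
      by_cases hs : s ∈ Set.Ioo 0 (b v)
      · rw [Set.indicator_of_mem hs, Set.indicator_of_mem (by exact ⟨hv, hs.1, hs.2⟩)]
      · rw [Set.indicator_of_notMem hs, Set.indicator_of_notMem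
          (fun hmem => hs ⟨hmem.2.1, hmem.2.2⟩)]
    · have hz : ∀ s, T.indicator g (s, v) = 0 := fun s =>
        Set.indicator_of_notMem (fun hmem => hv hmem.1) _
      simp only [hz, integral_zero, Set.indicator_of_notMem hv]
  simp only [hinner]
  rw [integral_indicator (isOpen_orderedSimplex 0 t n).measurableSet]

lemma clm_apply_eq_sum {e : ℕ} (L : (Fin e → ℝ) →L[ℝ] ℝ) (w : Fin e → ℝ) :
    L w = ∑ j, w j * L (Pi.single j 1) := by
  conv_lhs => rw [pi_eq_sum_univ w]
  rw [map_sum]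
  refine Finset.sum_congr rfl fun j _ => ?_
  rw [L.map_smul, smul_eq_mul]
  congr 2
  funext k
  simp [Pi.single_apply, eq_comm]

lemma contDeriv_comp {d : ℕ} {X : ℝ → Fin d → ℝ} (hX : ContDiff ℝ 1 X) (i : Fin d) :
    Continuous (deriv (fun s => X s i)) := by
  have h : ContDiff ℝ 1 (fun s => X s i) :=
    (ContinuousLinearMap.proj i : (Fin d → ℝ) →L[ℝ] ℝ).contDiff.comp hX
  exact h.continuous_deriv le_rfl

lemma ftc_step {d e : ℕ} {V : Fin d → (Fin e → ℝ) → Fin e → ℝ}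
    (hV : ∀ i, ContDiff ℝ (⊤:ℕ∞) (V i))
    {t : ℝ} {X : ℝ → Fin d → ℝ} (hX : ContDiff ℝ 1 X)
    {Y : ℝ → Fin e → ℝ} (hY : ContDiff ℝ 1 Y)
    (hODE : ∀ u ∈ Set.Icc (0 : ℝ) t,
      deriv Y u = fun j => ∑ i, V i (Y u) j * deriv (fun s => X s i) u)
    {G : (Fin e → ℝ) → ℝ} (hG : ContDiff ℝ (⊤:ℕ∞) G) {s : ℝ} (hs : s ∈ Set.Icc 0 t) :
    G (Y s) - G (Y 0)
      = ∑ i, ∫ σ in (0:ℝ)..s, dirDeriv (V i) G (Y σ) * deriv (fun r => X r i) σ := by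
  have hGd : Differentiable ℝ G := hG.differentiable (by simp)
  have hYd : Differentiable ℝ Y := hY.differentiable one_ne_zero
  have hdiff : ∀ u : ℝ, HasDerivAt (fun r => G (Y r)) (fderiv ℝ G (Y u) (deriv Y u)) u :=
    fun u => ((hGd (Y u)).hasFDerivAt).comp_hasDerivAt u (hYd u).hasDerivAt
  have hderiv_eq : deriv (fun r => G (Y r)) = fun u => fderiv ℝ G (Y u) (deriv Y u) :=
    funext fun u => (hdiff u).deriv
  have hconts : Continuous fun u => fderiv ℝ G (Y u) (deriv Y u) :=
    ((hG.continuous_fderiv (by simp)).comp hY.continuous).clm_apply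
      (hY.continuous_deriv le_rfl)
  have hftc : ∫ σ in (0:ℝ)..s, deriv (fun r => G (Y r)) σ = G (Y s) - G (Y 0) := by
    refine intervalIntegral.integral_deriv_eq_sub (fun x _ => (hdiff x).differentiableAt) ?_
    rw [hderiv_eq]
    exact hconts.intervalIntegrable 0 s
  rw [← hftc]
  have hcong : ∀ σ ∈ Set.uIcc (0:ℝ) s,
      deriv (fun r => G (Y r)) σ
        = ∑ i, dirDeriv (V i) G (Y σ) * deriv (fun r => X r i) σ := by
    intro σ hσ
    rw [Set.uIcc_of_le hs.1] at hσ
    have hσt : σ ∈ Set.Icc (0:ℝ) t := ⟨hσ.1, hσ.2.trans hs.2⟩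
    simp only [hderiv_eq]
    rw [hODE σ hσt, clm_apply_eq_sum]
    simp only [Finset.sum_mul]
    rw [Finset.sum_comm]
    refine Finset.sum_congr rfl fun i _ => ?_
    rw [dirDeriv, Finset.sum_mul]
    refine Finset.sum_congr rfl fun j _ => ?_
    ring
  rw [intervalIntegral.integral_congr hcong]
  rw [intervalIntegral.integral_finset_sum]
  intro i _
  have hc : Continuous fun σ => dirDeriv (V i) G (Y σ) * deriv (fun r => X r i) σ :=
    (((dirDeriv_contDiff (hV i) hG).continuous).comp hY.continuous).mul (contDeriv_comp hX i)
  exact hc.intervalIntegrable 0 s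

lemma remainder_step {d e n : ℕ} {V : Fin d → (Fin e → ℝ) → Fin e → ℝ}
    (hV : ∀ i, ContDiff ℝ (⊤:ℕ∞) (V i)) {F : (Fin e → ℝ) → ℝ} (hF : ContDiff ℝ (⊤:ℕ∞) F)
    {t : ℝ} (ht : 0 < t) {X : ℝ → Fin d → ℝ} (hX : ContDiff ℝ 1 X)
    {Y : ℝ → Fin e → ℝ} (hY : ContDiff ℝ 1 Y)
    (hODE : ∀ u ∈ Set.Icc (0 : ℝ) t,
      deriv Y u = fun j => ∑ i, V i (Y u) j * deriv (fun s => X s i) u)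
    (idx : Fin n → Fin d) :
    ∫ u in orderedSimplex 0 t n,
        (itDirDeriv V F idx (Y (if h : 0 < n then u ⟨0, h⟩ else t)) -
          itDirDeriv V F idx (Y 0)) * ∏ i, deriv (fun s => X s (idx i)) (u i)
    = ∑ i : Fin d,
        (itDirDeriv V F (Fin.cons i idx) (Y 0) * sig X 0 t (Fin.cons i idx)
          + ∫ u in orderedSimplex 0 t (n+1),
              (itDirDeriv V F (Fin.cons i idx) (Y (u 0)) -
                itDirDeriv V F (Fin.cons i idx) (Y 0))
                * ∏ j, deriv (fun s => X s ((Fin.cons i idx : Fin (n+1) → Fin d) j)) (u j)) := by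
  classical
  set G : (Fin e → ℝ) → ℝ := itDirDeriv V F idx with hG
  have hGsm : ContDiff ℝ (⊤:ℕ∞) G := itDirDeriv_contDiff hV hF idx
  set b : (Fin n → ℝ) → ℝ := fun v => if h : 0 < n then v ⟨0, h⟩ else t with hb
  have hbmem : ∀ u ∈ orderedSimplex 0 t n, b u ∈ Set.Icc (0:ℝ) t := by
    intro u hu
    rw [hb]
    split_ifs with h
    · exact ⟨(hu.1 _).1.le, (hu.1 _).2.le⟩
    · exact ⟨ht.le, le_rfl⟩
  set H : Fin d → ℝ → ℝ :=
    fun i σ => dirDeriv (V i) G (Y σ) * deriv (fun r => X r i) σ with hH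
  have hHc : ∀ i, Continuous (H i) := fun i =>
    (((dirDeriv_contDiff (hV i) hGsm).continuous).comp hY.continuous).mul (contDeriv_comp hX i)
  set Φ : Fin d → ℝ → ℝ := fun i c => ∫ σ in (0:ℝ)..c, H i σ with hΦ
  have hΦc : ∀ i, Continuous (Φ i) := fun i =>
    intervalIntegral.continuous_primitive (fun a b => (hHc i).intervalIntegrable a b) 0
  set P : (Fin n → ℝ) → ℝ := fun u => ∏ i, deriv (fun s => X s (idx i)) (u i) with hP
  have hPc : Continuous P := by
    refine continuous_finset_prod _ fun i _ => ?_
    exact (contDeriv_comp hX (idx i)).comp (continuous_apply i)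
  -- Step 1: rewrite the integrand via FTC
  have step1 : ∫ u in orderedSimplex 0 t n, (G (Y (b u)) - G (Y 0)) * P u
      = ∫ u in orderedSimplex 0 t n, ∑ i, Φ i (b u) * P u := by
    refine setIntegral_congr_fun (isOpen_orderedSimplex 0 t n).measurableSet ?_
    intro u hu
    have := ftc_step hV hX hY hODE hGsm (hbmem u hu)
    simp only []
    rw [this, Finset.sum_mul]
  -- Step 2: exchange sum and integral
  have step2 : ∫ u in orderedSimplex 0 t n, ∑ i, Φ i (b u) * P u
      = ∑ i, ∫ u in orderedSimplex 0 t n, Φ i (b u) * P u := by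
    refine integral_finset_sum _ fun i _ => ?_
    exact integrableOn_simplex (((hΦc i).comp (continuous_bnd t)).mul hPc)
  -- Step 3: each summand is an integral over the (n+1)-simplex
  have step3 : ∀ i : Fin d, ∫ u in orderedSimplex 0 t n, Φ i (b u) * P u
      = ∫ u in orderedSimplex 0 t (n+1), H i (u 0) * P (Fin.tail u) := by
    intro i
    have hfc : Continuous fun u : Fin (n+1) → ℝ => H i (u 0) * P (Fin.tail u) := by
      refine ((hHc i).comp (continuous_apply 0)).mul (hPc.comp ?_)
      exact continuous_pi fun j => continuous_apply j.succ
    rw [simplex_integral_succ _ hfc]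
    refine setIntegral_congr_fun (isOpen_orderedSimplex 0 t n).measurableSet ?_
    intro u hu
    have hb0 : 0 ≤ b u := (hbmem u hu).1
    simp only []
    have hioo : Φ i (b u) = ∫ s in Set.Ioo 0 (b u), H i s := by
      rw [hΦ]
      simp only []
      rw [intervalIntegral.integral_of_le hb0, integral_Ioc_eq_integral_Ioo]
    rw [hioo, ← integral_mul_const]
    refine setIntegral_congr_fun measurableSet_Ioo fun s _ => ?_
    simp [Fin.cons_zero, Fin.tail_cons]
  -- Step 4: identify the integrand with the canonical one for `Fin.cons i idx`
  have step4 : ∀ i : Fin d, ∫ u in orderedSimplex 0 t (n+1), H i (u 0) * P (Fin.tail u)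
      = ∫ u in orderedSimplex 0 t (n+1),
          itDirDeriv V F (Fin.cons i idx) (Y (u 0))
            * ∏ j, deriv (fun s => X s ((Fin.cons i idx : Fin (n+1) → Fin d) j)) (u j) := by
    intro i
    refine setIntegral_congr_fun (isOpen_orderedSimplex 0 t (n+1)).measurableSet ?_
    intro u _
    have hprod : (∏ j, deriv (fun s => X s ((Fin.cons i idx : Fin (n+1) → Fin d) j)) (u j))
        = deriv (fun s => X s i) (u 0) * ∏ j : Fin n, deriv (fun s => X s (idx j)) (u j.succ) := by
      rw [Fin.prod_univ_succ]
      simp [Fin.cons_zero, Fin.cons_succ]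
    have hit : itDirDeriv V F (Fin.cons i idx) = dirDeriv (V i) G := rfl
    simp only [hH, hP, hit, hprod, Fin.tail]
    ring
  -- Step 5: split off the constant term
  have step5 : ∀ i : Fin d,
      ∫ u in orderedSimplex 0 t (n+1),
          itDirDeriv V F (Fin.cons i idx) (Y (u 0))
            * ∏ j, deriv (fun s => X s ((Fin.cons i idx : Fin (n+1) → Fin d) j)) (u j)
      = itDirDeriv V F (Fin.cons i idx) (Y 0) * sig X 0 t (Fin.cons i idx)
          + ∫ u in orderedSimplex 0 t (n+1),
              (itDirDeriv V F (Fin.cons i idx) (Y (u 0)) -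
                itDirDeriv V F (Fin.cons i idx) (Y 0))
                * ∏ j, deriv (fun s => X s ((Fin.cons i idx : Fin (n+1) → Fin d) j)) (u j) := by
    intro i
    set c : ℝ := itDirDeriv V F (Fin.cons i idx) (Y 0) with hc
    set Q : (Fin (n+1) → ℝ) → ℝ :=
      fun u => ∏ j, deriv (fun s => X s ((Fin.cons i idx : Fin (n+1) → Fin d) j)) (u j) with hQdef
    have hQc : Continuous Q := by
      refine continuous_finset_prod _ fun j _ => ?_
      exact (contDeriv_comp hX ((Fin.cons i idx : Fin (n+1) → Fin d) j)).comp (continuous_apply j)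
    have hWc : Continuous fun u : Fin (n+1) → ℝ =>
        itDirDeriv V F (Fin.cons i idx) (Y (u 0)) := by
      exact ((itDirDeriv_contDiff hV hF _).continuous).comp
        (hY.continuous.comp (continuous_apply 0))
    have hsplit : ∀ u : Fin (n+1) → ℝ,
        itDirDeriv V F (Fin.cons i idx) (Y (u 0)) * Q u
          = c * Q u + (itDirDeriv V F (Fin.cons i idx) (Y (u 0)) - c) * Q u := by
      intro u; ring
    simp only [hQdef] at hsplit
    simp only [hsplit]
    rw [integral_add (integrableOn_simplex (f := fun u => c * ∏ j, deriv (fun s => X s ((Fin.cons i idx : Fin (n+1) → Fin d) j)) (u j)) (continuous_const.mul hQc))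
      (integrableOn_simplex (f := fun u => (itDirDeriv V F (Fin.cons i idx) (Y (u 0)) - c) * ∏ j, deriv (fun s => X s ((Fin.cons i idx : Fin (n+1) → Fin d) j)) (u j))
        ((hWc.sub continuous_const).mul hQc))]
    rw [integral_const_mul]
    rfl
  calc ∫ u in orderedSimplex 0 t n,
        (itDirDeriv V F idx (Y (if h : 0 < n then u ⟨0, h⟩ else t)) -
          itDirDeriv V F idx (Y 0)) * ∏ i, deriv (fun s => X s (idx i)) (u i)
      = ∫ u in orderedSimplex 0 t n, (G (Y (b u)) - G (Y 0)) * P u := rfl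
    _ = ∑ i, ∫ u in orderedSimplex 0 t n, Φ i (b u) * P u := by rw [step1, step2]
    _ = _ := by
        refine Finset.sum_congr rfl fun i _ => ?_
        rw [step3 i, step4 i, step5 i]

/-- non-commutative Taylor expansion with explicit remainder:
if `Y' = Σᵢ Vᵢ(Y)·(X^{(i)})'` on `[0,t]`, then for every `n ≥ 0`,
`F(Y t) = Σ_{k=0}^{n} Σ_{i₁…i_k} (∇_{V_{i₁}}⋯∇_{V_{i_k}}F)(Y 0) · S^{(i₁⋯i_k)}_{[0,t]}(X) + R_{n+1}(t)`
where the remainder is the iterated integral of the difference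
`(∇^{⊗n}F)(Y(u₁)) − (∇^{⊗n}F)(Y 0)` over the ordered simplex (here `u₁`, the
smallest time in the simplex, is read as `t` in the degenerate case `n = 0`). -/
theorem stmt_6 {d e : ℕ} (hd : 1 ≤ d) (he : 1 ≤ e)
    (V : Fin d → (Fin e → ℝ) → Fin e → ℝ) (hV : ∀ i, ContDiff ℝ (⊤ : ℕ∞) (V i))
    (F : (Fin e → ℝ) → ℝ) (hF : ContDiff ℝ (⊤ : ℕ∞) F)
    (t : ℝ) (ht : 0 < t)
    (X : ℝ → Fin d → ℝ) (hX : ContDiff ℝ 1 X)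
    (Y : ℝ → Fin e → ℝ) (hY : ContDiff ℝ 1 Y)
    (hODE : ∀ u ∈ Set.Icc (0 : ℝ) t,
      deriv Y u = fun j => ∑ i, V i (Y u) j * deriv (fun s => X s i) u)
    (n : ℕ) :
    F (Y t) =
      (∑ k ∈ Finset.range (n + 1), ∑ idx : Fin k → Fin d,
        itDirDeriv V F idx (Y 0) * sig X 0 t idx) +
      ∑ idx : Fin n → Fin d,
        ∫ u in orderedSimplex 0 t n,
          (itDirDeriv V F idx (Y (if h : 0 < n then u ⟨0, h⟩ else t)) -
            itDirDeriv V F idx (Y 0)) *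
          ∏ i, deriv (fun s => X s (idx i)) (u i) := by
  have hV' : ∀ i, ContDiff ℝ (⊤:ℕ∞) (V i) := fun i => (hV i).of_le (by simp)
  have hF' : ContDiff ℝ (⊤:ℕ∞) F := hF.of_le (by simp)
  induction n with
  | zero =>
    rw [Finset.sum_range_one]
    rw [Fintype.sum_unique, Fintype.sum_unique]
    rw [sig_zero]
    have h1 : itDirDeriv V F (default : Fin 0 → Fin d) = F := rfl
    rw [h1]
    have h2 : ∫ u in orderedSimplex 0 t 0,
        (F (Y (if h : (0:ℕ) < 0 then u ⟨0, h⟩ else t)) - F (Y 0)) *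
          ∏ i : Fin 0, deriv (fun s => X s ((default : Fin 0 → Fin d) i)) (u i)
        = F (Y t) - F (Y 0) := by
      simp only [dif_neg (lt_irrefl 0), Fin.prod_univ_zero, mul_one]
      rw [simplex_zero, Measure.restrict_univ, integral_const]
      simp [Measure.real, vol0]
    rw [h2]
    ring
  | succ n ih =>
    rw [ih]
    have key : (∑ idx : Fin n → Fin d,
        ∫ u in orderedSimplex 0 t n,
          (itDirDeriv V F idx (Y (if h : 0 < n then u ⟨0, h⟩ else t)) -
            itDirDeriv V F idx (Y 0)) *
          ∏ i, deriv (fun s => X s (idx i)) (u i))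
      = (∑ idx : Fin (n+1) → Fin d, itDirDeriv V F idx (Y 0) * sig X 0 t idx)
        + ∑ idx : Fin (n+1) → Fin d,
            ∫ u in orderedSimplex 0 t (n+1),
              (itDirDeriv V F idx (Y (if h : 0 < n + 1 then u ⟨0, h⟩ else t)) -
                itDirDeriv V F idx (Y 0)) *
              ∏ i, deriv (fun s => X s (idx i)) (u i) := by
      have hstep : ∀ idx : Fin n → Fin d,
          (∫ u in orderedSimplex 0 t n,
            (itDirDeriv V F idx (Y (if h : 0 < n then u ⟨0, h⟩ else t)) -
              itDirDeriv V F idx (Y 0)) *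
            ∏ i, deriv (fun s => X s (idx i)) (u i))
          = ∑ i : Fin d,
              (itDirDeriv V F (Fin.cons i idx) (Y 0) * sig X 0 t (Fin.cons i idx)
                + ∫ u in orderedSimplex 0 t (n+1),
                    (itDirDeriv V F (Fin.cons i idx) (Y (u 0)) -
                      itDirDeriv V F (Fin.cons i idx) (Y 0))
                      * ∏ j, deriv (fun s => X s ((Fin.cons i idx : Fin (n+1) → Fin d) j)) (u j)) :=
        fun idx => remainder_step hV' hF' ht hX hY hODE idx
      rw [Finset.sum_congr rfl fun idx _ => hstep idx]
      rw [Finset.sum_comm]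
      rw [← Fintype.sum_prod_type']
      have hequiv : ∀ g : (Fin (n+1) → Fin d) → ℝ,
          (∑ p : Fin d × (Fin n → Fin d), g (Fin.cons p.1 p.2))
            = ∑ idx : Fin (n+1) → Fin d, g idx := by
        intro g
        refine Fintype.sum_equiv (Fin.consEquiv fun _ => Fin d) _ _ fun p => ?_
        congr 1
      have hsum : ∀ idx : Fin (n+1) → Fin d,
          (∫ u in orderedSimplex 0 t (n+1),
                (itDirDeriv V F idx (Y (u 0)) - itDirDeriv V F idx (Y 0)) *
                ∏ i, deriv (fun s => X s (idx i)) (u i))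
          = ∫ u in orderedSimplex 0 t (n+1),
                (itDirDeriv V F idx (Y (if h : 0 < n + 1 then u ⟨0, h⟩ else t)) -
                  itDirDeriv V F idx (Y 0)) *
                ∏ i, deriv (fun s => X s (idx i)) (u i) := by
        intro idx
        refine setIntegral_congr_fun (isOpen_orderedSimplex 0 t (n+1)).measurableSet ?_
        intro u _
        have h0 : (if h : 0 < n + 1 then u ⟨0, h⟩ else t) = u 0 := by
          rw [dif_pos (Nat.succ_pos n), Fin.mk_zero]
        simp only [h0]
      rw [hequiv (fun idx => itDirDeriv V F idx (Y 0) * sig X 0 t idx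
        + ∫ u in orderedSimplex 0 t (n+1),
            (itDirDeriv V F idx (Y (u 0)) - itDirDeriv V F idx (Y 0)) *
            ∏ i, deriv (fun s => X s (idx i)) (u i))]
      rw [Finset.sum_add_distrib]
      congr 1
    rw [key, ← add_assoc]
    congr 1
    exact (Finset.sum_range_succ _ (n + 1)).symm
end

section
/- (Universal approximation, Theorem 1.) Let d ≥ 1, let K be a compact topological space, and suppose that for every finite word I over the alphabet {1,…,d} (including the empty word ∅) there is a continuous function S^I : K → ℝ such that: (i) S^∅ is the constant function 1; (ii) for all words I of length p and J of length q, S^I · S^J = Σ_{A ⊆ {1,…,p+q}, |A| = p} S^{w_A} pointwise on K, where w_A is the interleaving of I and J determined by A; and (iii) the family {S^I} separates the points of K, i.e. for any x ≠ y in K there is a word I with S^I(x) ≠ S^I(y). Then for every continuous function f : K → ℝ and every ε > 0 there exist finitely many words I₁,…,I_m and real coefficients w₁,…,w_m such that sup_{x ∈ K} | f(x) − Σ_{j=1}^{m} w_j S^{I_j}(x) | < ε; that is, the linear span of {S^I} is dense in C(K, ℝ) with the supremum norm. -/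
open Submodule Pointwise

theorem Submodule.mul_mem_span_of_forall_mul_mem_span {R A : Type*} [CommSemiring R]
    [Semiring A] [Algebra R A] {s : Set A} (hs : ∀ a ∈ s, ∀ b ∈ s, a * b ∈ span R s)
    {x y : A} (hx : x ∈ span R s) (hy : y ∈ span R s) : x * y ∈ span R s := by
  have hxy : x * y ∈ span R (s * s) := span_mul_span R s s ▸ mul_mem_mul hx hy
  exact span_le.mpr (Set.mul_subset_iff.mpr hs) hxy

theorem Submodule.exists_fin_sum_eq_of_mem_span_range {R M ι : Type*} [Semiring R]
    [AddCommMonoid M] [Module R M] {v : ι → M} {x : M} (hx : x ∈ span R (Set.range v)) :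
    ∃ (m : ℕ) (Is : Fin m → ι) (w : Fin m → R), ∑ j, w j • v (Is j) = x := by
  obtain ⟨m, w, g, rfl⟩ := mem_span_set'.mp hx
  choose Is hIs using fun j => (g j).2
  exact ⟨m, Is, w, by simp only [hIs]⟩

theorem ContinuousMap.exists_mem_span_near_of_separatesPoints {K : Type*} [TopologicalSpace K]
    [CompactSpace K] {s : Set C(K, ℝ)} (hone : 1 ∈ span ℝ s)
    (hmul : ∀ a ∈ s, ∀ b ∈ s, a * b ∈ span ℝ s)
    (hsep : ∀ x y : K, x ≠ y → ∃ g ∈ s, g x ≠ g y) (f : K → ℝ) (hf : Continuous f)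
    {ε : ℝ} (hε : 0 < ε) : ∃ g ∈ span ℝ s, ∀ x, |f x - g x| < ε := by
  let A : Subalgebra ℝ C(K, ℝ) := (span ℝ s).toSubalgebra hone
    fun _ _ => mul_mem_span_of_forall_mul_mem_span hmul
  have hsepA : A.SeparatesPoints := fun x y hxy => by
    obtain ⟨g, hg, hgxy⟩ := hsep x y hxy
    exact ⟨g, ⟨g, subset_span hg, rfl⟩, hgxy⟩
  obtain ⟨g, hg⟩ := exists_mem_subalgebra_near_continuous_of_separatesPoints A hsepA f hf ε hε
  exact ⟨g, g.2, fun x => by simpa only [abs_sub_comm, Real.norm_eq_abs] using hg x⟩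

theorem stmt_8_general {d : ℕ} (K : Type*) [TopologicalSpace K] [CompactSpace K]
    (S : List (Fin d) → K → ℝ)
    (hcont : ∀ I, Continuous (S I))
    (hone : ∀ x, S [] x = 1)
    (hshuffle : ∀ (I J : List (Fin d)) (x : K),
      S I x * S J x =
        ∑ A : {A : Finset (Fin (I.length + J.length)) // A.card = I.length},
          S (List.ofFn (interleave I.get J.get A.1 A.2)) x)
    (hsep : ∀ x y : K, x ≠ y → ∃ I : List (Fin d), S I x ≠ S I y)
    (f : K → ℝ) (hf : Continuous f) (ε : ℝ) (hε : 0 < ε) :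
    ∃ (m : ℕ) (Is : Fin m → List (Fin d)) (w : Fin m → ℝ),
      ∀ x : K, |f x - ∑ j, w j * S (Is j) x| < ε := by
  let F : List (Fin d) → C(K, ℝ) := fun I => ⟨S I, hcont I⟩
  have hone_mem : 1 ∈ span ℝ (Set.range F) :=
    subset_span ⟨[], ContinuousMap.ext hone⟩
  have hmul_mem : ∀ a ∈ Set.range F, ∀ b ∈ Set.range F, a * b ∈ span ℝ (Set.range F) := by
    rintro _ ⟨I, rfl⟩ _ ⟨J, rfl⟩
    have hFIJ : F I * F J = ∑ A : {A : Finset (Fin (I.length + J.length)) // A.card = I.length},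
        F (List.ofFn (interleave I.get J.get A.1 A.2)) := by
      ext x
      simpa [F] using hshuffle I J x
    exact hFIJ ▸ sum_mem fun A _ => subset_span ⟨_, rfl⟩
  have hsepF : ∀ x y : K, x ≠ y → ∃ g ∈ Set.range F, g x ≠ g y := fun x y hxy =>
    let ⟨I, hI⟩ := hsep x y hxy
    ⟨F I, ⟨I, rfl⟩, hI⟩
  obtain ⟨g, hg, hfg⟩ :=
    ContinuousMap.exists_mem_span_near_of_separatesPoints hone_mem hmul_mem hsepF f hf hε
  obtain ⟨m, Is, w, rfl⟩ := exists_fin_sum_eq_of_mem_span_range hg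
  refine ⟨m, Is, w, fun x => ?_⟩
  simpa [F] using hfg x

/-- universal approximation: if `K` is a compact space and
`S : (words over {1,…,d}) → C(K,ℝ)` is a family of continuous functions such that
`S^∅ = 1`, the shuffle-product identity holds pointwise, and the family separates
the points of `K`, then finite linear combinations of the `S^I` are uniformly
dense in `C(K,ℝ)`. -/
theorem stmt_8 {d : ℕ} (hd : 1 ≤ d) (K : Type*) [TopologicalSpace K] [CompactSpace K]
    (S : List (Fin d) → K → ℝ)
    (hcont : ∀ I, Continuous (S I))
    (hone : ∀ x, S [] x = 1)
    (hshuffle : ∀ (I J : List (Fin d)) (x : K),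
      S I x * S J x =
        ∑ A : {A : Finset (Fin (I.length + J.length)) // A.card = I.length},
          S (List.ofFn (interleave I.get J.get A.1 A.2)) x)
    (hsep : ∀ x y : K, x ≠ y → ∃ I : List (Fin d), S I x ≠ S I y)
    (f : K → ℝ) (hf : Continuous f) (ε : ℝ) (hε : 0 < ε) :
    ∃ (m : ℕ) (Is : Fin m → List (Fin d)) (w : Fin m → ℝ),
      ∀ x : K, |f x - ∑ j, w j * S (Is j) x| < ε :=
  stmt_8_general K S hcont hone hshuffle hsep f hf ε hε
end
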